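/- For every n ≥ 0, the number of standard Young tableaux of shape θ^(n) = (n+2,2,1^n) equals C(2n,n)·(4n+4)(2n+1)/(n+2), where C(2n,n) is the central binomial coefficient. -/

import Mathlib

/-- The four unit steps of a lattice path. -/
inductive Step : Type
  | N | S | E | W
  deriving DecidableEq

/-- The vector in `ℤ × ℤ` corresponding to a step. -/
def stepVec : Step → ℤ × ℤ
  | Step.N => (0, 1)
  | Step.S => (0, -1)
  | Step.E => (1, 0)
  | Step.W => (-1, 0)

/-- The endpoint of the lattice path described by the word `w`, starting at the origin. -/
def endpt (w : List Step) : ℤ × ℤ := (w.map stepVec).sum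

/-- `w` is a lattice path in `𝒫ₙ`: it has length `2n+2`, stays weakly in the first
quadrant, and ends at `(n, n)`. -/
def IsPath (n : ℕ) (w : List Step) : Prop :=
  w.length = 2 * n + 2 ∧
  (∀ k : ℕ, 0 ≤ (endpt (w.take k)).1 ∧ 0 ≤ (endpt (w.take k)).2) ∧
  endpt w = ((n : ℤ), (n : ℤ))

/-- The cells of the Young diagram of `θ⁽ⁿ⁾ = (n+2, 2, 1ⁿ)`, in (row, column) matrix
coordinates, 0-indexed, English orientation. -/
def cells (n : ℕ) : Set (ℕ × ℕ) :=
  {c | (c.1 = 0 ∧ c.2 ≤ n + 1) ∨ c = (1, 1) ∨ (c.2 = 0 ∧ 1 ≤ c.1 ∧ c.1 ≤ n + 1)}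

/-- `T` is a standard Young tableau of shape `θ⁽ⁿ⁾`: it is a bijective filling of the
cells with `1, …, 2n+4` (and `0` elsewhere), strictly increasing along rows and
down columns. -/
def IsSYT (n : ℕ) (T : ℕ × ℕ → ℕ) : Prop :=
  (∀ c, c ∉ cells n → T c = 0) ∧
  Set.BijOn T (cells n) (Set.Icc 1 (2 * n + 4)) ∧
  (∀ c ∈ cells n, ∀ d ∈ cells n, c.1 = d.1 → c.2 < d.2 → T c < T d) ∧
  (∀ c ∈ cells n, ∀ d ∈ cells n, c.2 = d.2 → c.1 < d.1 → T c < T d)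

/-- The value `m` appears in the arm (first row) of `T`. -/
def InArm (n : ℕ) (T : ℕ × ℕ → ℕ) (m : ℕ) : Prop := ∃ j ≤ n + 1, T (0, j) = m

/-- The value `m` appears in the leg (first column) of `T`. -/
def InLeg (n : ℕ) (T : ℕ × ℕ → ℕ) (m : ℕ) : Prop := ∃ i ≤ n + 1, T (i, 0) = m

/-- The value `m` appears in the heart (the cell `(1,1)`) of `T`. -/
def InHeart (T : ℕ × ℕ → ℕ) (m : ℕ) : Prop := T (1, 1) = m

open Classical in
/-- The map ψ: the `i`-th letter (1-based, `i = k+1` for `k : Fin (2n+2)`) is determined by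
the position of the entry `i+2` of `T`, and, if `i+2` is in the heart, by the position of `2`. -/
noncomputable def psi (n : ℕ) (T : ℕ × ℕ → ℕ) : List Step :=
  List.ofFn (fun k : Fin (2 * n + 2) =>
    if InArm n T (k.val + 3) then Step.E
    else if InLeg n T (k.val + 3) then Step.N
    else if InHeart T (k.val + 3) ∧ InArm n T 2 then Step.S
    else Step.W)

/-! In a standard tableau of shape `θ⁽ⁿ⁾` the entry `1` sits in the corner, and the tableau is
determined by the entry `h` of the cell `(1, 1)` and the set `A` of the `n + 1` entries in the rest
of the first row: the remaining entries fill the rest of the first column increasingly, and the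
only conditions left are that both `A` and the leg contain an entry smaller than `h`.
For fixed `h ≥ 3`, of the `C(2n+2, n+1)` choices of `A` exactly `C(2n+4-h, n+1)` violate the
first condition and as many the second, never both. Summing over `h` with the hockey-stick
identity gives `(2n+2) C(2n+2, n+1) - 2 C(2n+2, n+2)`, which is the stated number. -/

open Finset

namespace Finset

variable {s : Finset ℕ} {i j : ℕ}

lemma setOf_lt_card_toFinset (s : Finset ℕ) :
    {m : ℕ | ∀ hf : (Set.ofPred (· ∈ s)).Finite, m < #hf.toFinset} = Set.Iio #s := by
  ext m
  simp [s.finite_toSet]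

lemma nth_mem (hj : j < #s) : Nat.nth (· ∈ s) j ∈ s :=
  Nat.nth_mem_of_lt_card s.finite_toSet (by simpa using hj)

lemma nth_lt_nth (hij : i < j) (hj : j < #s) : Nat.nth (· ∈ s) i < Nat.nth (· ∈ s) j :=
  Nat.nth_lt_nth_of_lt_card s.finite_toSet hij (by simpa using hj)

lemma nth_of_card_le (hj : #s ≤ j) : Nat.nth (· ∈ s) j = 0 :=
  Nat.nth_of_card_le s.finite_toSet (by simpa using hj)

lemma exists_lt_card_nth_eq {a : ℕ} (ha : a ∈ s) : ∃ j < #s, Nat.nth (· ∈ s) j = a := by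
  simpa using Nat.exists_lt_card_finite_nth_eq s.finite_toSet ha

lemma nth_zero_le {a : ℕ} (ha : a ∈ s) : Nat.nth (· ∈ s) 0 ≤ a := by
  obtain ⟨j, hj, rfl⟩ := exists_lt_card_nth_eq ha
  exact Nat.nth_le_nth_of_lt_card s.finite_toSet j.zero_le (by simpa using hj)

lemma count_nth (hj : j < #s) : Nat.count (· ∈ s) (Nat.nth (· ∈ s) j) = j :=
  Nat.count_nth_of_lt_card_finite s.finite_toSet (by simpa using hj)

lemma image_range_nth : (range #s).image (Nat.nth (· ∈ s)) = s := by
  ext a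
  simp only [mem_image, mem_range]
  exact ⟨fun ⟨j, hj, hja⟩ => hja ▸ nth_mem hj, exists_lt_card_nth_eq⟩

lemma card_image_range_of_strictMonoOn {f : ℕ → ℕ} {k : ℕ} (hf : StrictMonoOn f (Set.Iio k)) :
    #((range k).image f) = k := by
  rw [card_image_of_injOn (by simpa using hf.injOn), card_range]

lemma nth_image_range_of_strictMonoOn {f : ℕ → ℕ} {k : ℕ} (hf : StrictMonoOn f (Set.Iio k))
    (hj : j < k) : Nat.nth (· ∈ (range k).image f) j = f j := by
  have hdom := setOf_lt_card_toFinset ((range k).image f)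
  rw [card_image_range_of_strictMonoOn hf] at hdom
  refine (Nat.eq_nth_of_strictMonoOn_of_mapsTo_of_surjOn f ?_ ?_ ?_ ?_).symm <;> rw [hdom]
  · intro y hy
    simpa using hy
  · exact fun a ha => mem_image_of_mem f (mem_range.2 ha)
  · exact hf
  · exact hj

lemma strictMonoOn_of_eq_nth_succ {f : ℕ → ℕ} (hf : ∀ j, f (j + 1) = Nat.nth (· ∈ s) j)
    (hf0 : ∀ a ∈ s, f 0 < a) : StrictMonoOn f (Set.Iic #s) := by
  rintro (_ | i) (hi : _ ≤ #s) (_ | j) (hj : _ ≤ #s) hij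
  · exact absurd hij (lt_irrefl 0)
  · rw [hf]
    exact hf0 _ (nth_mem (by omega))
  · omega
  · rw [hf, hf]
    exact nth_lt_nth (by omega) (by omega)

end Finset

section Counting

variable {α : Type*} [DecidableEq α]

lemma filter_powersetCard_subset {S U : Finset α} (hU : U ⊆ S) (k : ℕ) :
    {A ∈ S.powersetCard k | A ⊆ U} = U.powersetCard k := by
  ext A
  simp only [mem_filter, mem_powersetCard]
  exact ⟨fun ⟨⟨_, hk⟩, hAU⟩ => ⟨hAU, hk⟩, fun ⟨hAU, hk⟩ => ⟨⟨hAU.trans hU, hk⟩, hAU⟩⟩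

lemma card_filter_powersetCard_sdiff_subset {S U : Finset α} (hU : U ⊆ S) {k : ℕ}
    (hk : k ≤ #S) : #{A ∈ S.powersetCard k | S \ A ⊆ U} = (#U).choose (#S - k) := by
  rw [← card_powersetCard, ← filter_powersetCard_subset hU]
  refine card_nbij' (S \ ·) (S \ ·) ?_ ?_ ?_ ?_
  · intro A hA
    simp only [coe_filter, mem_powersetCard, Set.mem_ofPred_eq] at hA ⊢
    refine ⟨⟨sdiff_subset, ?_⟩, hA.2⟩
    rw [card_sdiff_of_subset hA.1.1, hA.1.2]
  · intro B hB
    simp only [coe_filter, mem_powersetCard, Set.mem_ofPred_eq] at hB ⊢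
    refine ⟨⟨sdiff_subset, ?_⟩, ?_⟩
    · rw [card_sdiff_of_subset hB.1.1, hB.1.2]
      omega
    · rw [Finset.sdiff_sdiff_eq_self hB.1.1]
      exact hB.2
  · exact fun A hA => Finset.sdiff_sdiff_eq_self (mem_powersetCard.1 (mem_filter.1 hA).1).1
  · exact fun B hB => Finset.sdiff_sdiff_eq_self (mem_powersetCard.1 (mem_filter.1 hB).1).1

/-- A `k`-subset `A` of `S` fails to meet `p` on both sides exactly when `A` or `S \ A` lies in
`U = {x ∈ S | ¬p x}`; these cases exclude each other as soon as `p` holds somewhere on `S`. -/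
theorem card_filter_exists_and_exists_sdiff_add {S : Finset α} {p : α → Prop}
    [DecidablePred p] {k : ℕ} (hk : k ≤ #S) (hS : ∃ x ∈ S, p x) :
    #{A ∈ S.powersetCard k | (∃ a ∈ A, p a) ∧ ∃ b ∈ S \ A, p b} +
        (#{x ∈ S | ¬p x}).choose k + (#{x ∈ S | ¬p x}).choose (#S - k) =
      (#S).choose k := by
  set U := {x ∈ S | ¬p x}
  have hU : U ⊆ S := filter_subset _ _
  have hmeets : ∀ B ⊆ S, (∃ b ∈ B, p b) ↔ ¬B ⊆ U := fun B hB => by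
    simp only [U, subset_iff, mem_filter, not_forall, not_and, not_not]
    exact ⟨fun ⟨b, hb, hpb⟩ => ⟨b, hb, fun _ => hpb⟩, fun ⟨b, hb, hpb⟩ => ⟨b, hb, hpb (hB hb)⟩⟩
  have hbad : {A ∈ S.powersetCard k | ¬((∃ a ∈ A, p a) ∧ ∃ b ∈ S \ A, p b)} =
      {A ∈ S.powersetCard k | A ⊆ U} ∪ {A ∈ S.powersetCard k | S \ A ⊆ U} := by
    rw [← filter_or]
    refine filter_congr fun A hA => ?_
    rw [hmeets A (mem_powersetCard.1 hA).1, hmeets _ sdiff_subset]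
    tauto
  have hdisj : Disjoint {A ∈ S.powersetCard k | A ⊆ U} {A ∈ S.powersetCard k | S \ A ⊆ U} := by
    refine disjoint_filter.2 fun A _ hA hsA => ?_
    obtain ⟨x, hx, hpx⟩ := hS
    have : x ∈ U := by
      by_cases hxA : x ∈ A
      · exact hA hxA
      · exact hsA (mem_sdiff.2 ⟨hx, hxA⟩)
    exact (mem_filter.1 this).2 hpx
  rw [← card_powersetCard k S, ← card_filter_add_card_filter_not (s := S.powersetCard k)
      (fun A => (∃ a ∈ A, p a) ∧ ∃ b ∈ S \ A, p b),
    hbad, card_union_of_disjoint hdisj, filter_powersetCard_subset hU,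
    card_filter_powersetCard_sdiff_subset hU hk, card_powersetCard, add_assoc]

end Counting

section Shape

variable {n : ℕ}

lemma mem_cells_iff {c : ℕ × ℕ} : c ∈ cells n ↔
    c = (0, 0) ∨ (∃ j ≤ n, c = (0, j + 1)) ∨ c = (1, 1) ∨ ∃ i ≤ n, c = (i + 1, 0) := by
  obtain ⟨i, j⟩ := c
  simp only [cells, Set.mem_ofPred_eq, Prod.mk.injEq]
  constructor
  · rintro (⟨rfl, hj⟩ | h | ⟨rfl, hi, hi'⟩)
    · rcases j with _ | j
      · exact Or.inl ⟨rfl, rfl⟩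
      · exact Or.inr (Or.inl ⟨j, by omega, rfl, rfl⟩)
    · exact Or.inr (Or.inr (Or.inl h))
    · exact Or.inr (Or.inr (Or.inr ⟨i - 1, by omega, by omega, rfl⟩))
  · rintro (⟨rfl, rfl⟩ | ⟨j, hj, rfl, rfl⟩ | h | ⟨i, hi, rfl, rfl⟩)
    · exact Or.inl ⟨rfl, by omega⟩
    · exact Or.inl ⟨rfl, by omega⟩
    · exact Or.inr (Or.inl h)
    · exact Or.inr (Or.inr ⟨rfl, by omega, by omega⟩)

lemma row_mem_cells {j : ℕ} : (0, j) ∈ cells n ↔ j ≤ n + 1 := by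
  simp [cells]

lemma col_mem_cells {i : ℕ} : (i, 0) ∈ cells n ↔ i ≤ n + 1 := by
  simp only [cells, Set.mem_ofPred_eq, Prod.mk.injEq, le_add_iff_nonneg_left, zero_le, and_true,
    zero_ne_one, and_false, true_and, false_or]
  omega

lemma heart_mem_cells : (1, 1) ∈ cells n := by
  simp [cells]

lemma swap_mem_cells {c : ℕ × ℕ} : c.swap ∈ cells n ↔ c ∈ cells n := by
  obtain ⟨i, j⟩ := c
  simp only [cells, Set.mem_ofPred_eq, Prod.swap_prod_mk, Prod.mk.injEq]
  omega

lemma row_lt_of_strictMonoOn {T : ℕ × ℕ → ℕ}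
    (hrow : StrictMonoOn (fun j => T (0, j)) (Set.Iic (n + 1))) (hcorner : T (1, 0) < T (1, 1)) :
    ∀ c ∈ cells n, ∀ d ∈ cells n, c.1 = d.1 → c.2 < d.2 → T c < T d := by
  rintro ⟨i, j⟩ hc ⟨i', j'⟩ hd (rfl : i = i') (hjj : j < j')
  rcases i with _ | i
  · exact hrow (row_mem_cells.1 hc) (row_mem_cells.1 hd) hjj
  · simp only [cells, Set.mem_ofPred_eq, Prod.mk.injEq] at hc hd
    obtain ⟨rfl, rfl, rfl⟩ : i = 0 ∧ j = 0 ∧ j' = 1 := by omega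
    exact hcorner

theorem isSYT_iff {T : ℕ × ℕ → ℕ} : IsSYT n T ↔
    (∀ c, c ∉ cells n → T c = 0) ∧ Set.BijOn T (cells n) (Set.Icc 1 (2 * n + 4)) ∧
      StrictMonoOn (fun j => T (0, j)) (Set.Iic (n + 1)) ∧
      StrictMonoOn (fun i => T (i, 0)) (Set.Iic (n + 1)) ∧
      T (0, 1) < T (1, 1) ∧ T (1, 0) < T (1, 1) := by
  constructor
  · rintro ⟨hzero, hbij, hrow, hcol⟩
    refine ⟨hzero, hbij, fun a ha b hb hab => ?_, fun a ha b hb hab => ?_, ?_, ?_⟩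
    · exact hrow _ (row_mem_cells.2 ha) _ (row_mem_cells.2 hb) rfl hab
    · exact hcol _ (col_mem_cells.2 ha) _ (col_mem_cells.2 hb) rfl hab
    · exact hcol _ (row_mem_cells.2 (by omega)) _ heart_mem_cells rfl one_pos
    · exact hrow _ (col_mem_cells.2 (by omega)) _ heart_mem_cells rfl one_pos
  · rintro ⟨hzero, hbij, hrow, hcol, harm, hleg⟩
    refine ⟨hzero, hbij, row_lt_of_strictMonoOn hrow hleg, fun c hc d hd h2 h1 => ?_⟩
    -- `θ⁽ⁿ⁾` is its own conjugate: the columns of `T` are the rows of `T ∘ Prod.swap`.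
    exact row_lt_of_strictMonoOn (T := T ∘ Prod.swap) hcol harm c.swap (swap_mem_cells.2 hc)
      d.swap (swap_mem_cells.2 hd) h2 h1

end Shape

def offHeart (n h : ℕ) : Finset ℕ := (Icc 2 (2 * n + 4)).erase h

def admissibleArms (n h : ℕ) : Finset (Finset ℕ) :=
  {A ∈ (offHeart n h).powersetCard (n + 1) | (∃ a ∈ A, a < h) ∧ ∃ b ∈ offHeart n h \ A, b < h}

/-- Past the last element of a finset `Nat.nth` is `0`, so for `A ∈ admissibleArms n h` this
filling vanishes outside the diagram. -/
noncomputable def tableauOf (n h : ℕ) (A : Finset ℕ) : ℕ × ℕ → ℕ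
  | (0, 0) => 1
  | (0, j + 1) => Nat.nth (· ∈ A) j
  | (1, 1) => h
  | (i + 1, 0) => Nat.nth (· ∈ offHeart n h \ A) i
  | _ => 0

def cellOf (n h : ℕ) (A : Finset ℕ) (v : ℕ) : ℕ × ℕ :=
  if v = 1 then (0, 0)
  else if v = h then (1, 1)
  else if v ∈ A then (0, Nat.count (· ∈ A) v + 1)
  else (Nat.count (· ∈ offHeart n h \ A) v + 1, 0)

def armValues (n : ℕ) (T : ℕ × ℕ → ℕ) : Finset ℕ := (range (n + 1)).image fun j => T (0, j + 1)

section Tableau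

variable {n h : ℕ} {A : Finset ℕ}

lemma mem_offHeart {x : ℕ} : x ∈ offHeart n h ↔ x ≠ h ∧ 2 ≤ x ∧ x ≤ 2 * n + 4 := by
  simp [offHeart]

lemma card_offHeart (hh : h ∈ Icc 3 (2 * n + 4)) : #(offHeart n h) = 2 * n + 2 := by
  rw [offHeart, card_erase_of_mem (Icc_subset_Icc_left (by norm_num) hh), Nat.card_Icc]
  omega

lemma subset_of_mem_admissibleArms (hA : A ∈ admissibleArms n h) : A ⊆ offHeart n h :=
  (mem_powersetCard.1 (mem_filter.1 hA).1).1

lemma card_of_mem_admissibleArms (hA : A ∈ admissibleArms n h) : #A = n + 1 :=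
  (mem_powersetCard.1 (mem_filter.1 hA).1).2

lemma card_sdiff_of_mem_admissibleArms (hh : h ∈ Icc 3 (2 * n + 4))
    (hA : A ∈ admissibleArms n h) : #(offHeart n h \ A) = n + 1 := by
  rw [card_sdiff_of_subset (subset_of_mem_admissibleArms hA), card_offHeart hh,
    card_of_mem_admissibleArms hA]
  omega

lemma tableauOf_zero_zero : tableauOf n h A (0, 0) = 1 := rfl

lemma tableauOf_one_one : tableauOf n h A (1, 1) = h := rfl

lemma tableauOf_zero_succ (j : ℕ) : tableauOf n h A (0, j + 1) = Nat.nth (· ∈ A) j := rfl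

lemma tableauOf_succ_zero (i : ℕ) :
    tableauOf n h A (i + 1, 0) = Nat.nth (· ∈ offHeart n h \ A) i := by
  simp only [tableauOf]

lemma tableauOf_eq_zero (hh : h ∈ Icc 3 (2 * n + 4)) (hA : A ∈ admissibleArms n h)
    {c : ℕ × ℕ} (hc : c ∉ cells n) : tableauOf n h A c = 0 := by
  obtain ⟨_ | i, _ | j⟩ := c
  · exact absurd (row_mem_cells.2 (Nat.zero_le _)) hc
  · have := mt row_mem_cells.2 hc
    exact nth_of_card_le (by rw [card_of_mem_admissibleArms hA]; omega)
  · have := mt col_mem_cells.2 hc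
    rw [tableauOf_succ_zero]
    exact nth_of_card_le (by rw [card_sdiff_of_mem_admissibleArms hh hA]; omega)
  · obtain _ | i := i <;> obtain _ | j := j
    · exact absurd heart_mem_cells hc
    all_goals rfl

lemma nth_mem_arm (hA : A ∈ admissibleArms n h) {j : ℕ} (hj : j ≤ n) : Nat.nth (· ∈ A) j ∈ A :=
  nth_mem (by rw [card_of_mem_admissibleArms hA]; omega)

lemma nth_mem_leg (hh : h ∈ Icc 3 (2 * n + 4)) (hA : A ∈ admissibleArms n h) {i : ℕ}
    (hi : i ≤ n) : Nat.nth (· ∈ offHeart n h \ A) i ∈ offHeart n h \ A :=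
  nth_mem (by rw [card_sdiff_of_mem_admissibleArms hh hA]; omega)

lemma mapsTo_tableauOf (hh : h ∈ Icc 3 (2 * n + 4)) (hA : A ∈ admissibleArms n h) :
    Set.MapsTo (tableauOf n h A) (cells n) (Set.Icc 1 (2 * n + 4)) := by
  have hh' := mem_Icc.1 hh
  intro c hc
  rcases mem_cells_iff.1 hc with rfl | ⟨j, hj, rfl⟩ | rfl | ⟨i, hi, rfl⟩
  · rw [tableauOf_zero_zero]
    exact ⟨le_rfl, by omega⟩
  · have := mem_offHeart.1 (subset_of_mem_admissibleArms hA (nth_mem_arm hA hj))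
    rw [tableauOf_zero_succ]
    exact ⟨by omega, this.2.2⟩
  · rw [tableauOf_one_one]
    exact ⟨by omega, hh'.2⟩
  · have := mem_offHeart.1 (mem_sdiff.1 (nth_mem_leg hh hA hi)).1
    rw [tableauOf_succ_zero]
    exact ⟨by omega, this.2.2⟩

lemma leftInvOn_cellOf (hh : h ∈ Icc 3 (2 * n + 4)) (hA : A ∈ admissibleArms n h) :
    Set.LeftInvOn (cellOf n h A) (tableauOf n h A) (cells n) := by
  intro c hc
  rcases mem_cells_iff.1 hc with rfl | ⟨j, hj, rfl⟩ | rfl | ⟨i, hi, rfl⟩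
  · rfl
  · have harm := nth_mem_arm hA hj
    obtain ⟨hne, h2, -⟩ := mem_offHeart.1 (subset_of_mem_admissibleArms hA harm)
    rw [tableauOf_zero_succ, cellOf, if_neg (by omega), if_neg hne, if_pos harm,
      count_nth (by rw [card_of_mem_admissibleArms hA]; omega)]
  · rw [tableauOf_one_one, cellOf, if_neg (by have := (mem_Icc.1 hh).1; omega), if_pos rfl]
  · obtain ⟨hmem, hnA⟩ := mem_sdiff.1 (nth_mem_leg hh hA hi)
    obtain ⟨hne, h2, -⟩ := mem_offHeart.1 hmem
    rw [tableauOf_succ_zero, cellOf, if_neg (by omega), if_neg hne, if_neg hnA,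
      count_nth (by rw [card_sdiff_of_mem_admissibleArms hh hA]; omega)]

lemma surjOn_tableauOf (hh : h ∈ Icc 3 (2 * n + 4)) (hA : A ∈ admissibleArms n h) :
    Set.SurjOn (tableauOf n h A) (cells n) (Set.Icc 1 (2 * n + 4)) := by
  intro v ⟨hv1, hv2⟩
  by_cases hv1' : v = 1
  · exact ⟨(0, 0), row_mem_cells.2 (Nat.zero_le _), hv1'.symm⟩
  by_cases hvh : v = h
  · exact ⟨(1, 1), heart_mem_cells, hvh.symm⟩
  by_cases hvA : v ∈ A
  · obtain ⟨j, hj, rfl⟩ := exists_lt_card_nth_eq hvA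
    rw [card_of_mem_admissibleArms hA] at hj
    exact ⟨(0, j + 1), row_mem_cells.2 (by omega), rfl⟩
  · have hvL : v ∈ offHeart n h \ A := mem_sdiff.2 ⟨mem_offHeart.2 ⟨hvh, by omega, hv2⟩, hvA⟩
    obtain ⟨i, hi, rfl⟩ := exists_lt_card_nth_eq hvL
    rw [card_sdiff_of_mem_admissibleArms hh hA] at hi
    exact ⟨(i + 1, 0), col_mem_cells.2 (by omega), tableauOf_succ_zero i⟩

theorem isSYT_tableauOf (hh : h ∈ Icc 3 (2 * n + 4)) (hA : A ∈ admissibleArms n h) :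
    IsSYT n (tableauOf n h A) := by
  obtain ⟨-, ⟨a, haA, hah⟩, ⟨b, hbL, hbh⟩⟩ := mem_filter.1 hA
  have hrow := strictMonoOn_of_eq_nth_succ (f := fun j => tableauOf n h A (0, j)) (fun _ => rfl)
    fun a ha => (mem_offHeart.1 (subset_of_mem_admissibleArms hA ha)).2.1
  have hcol := strictMonoOn_of_eq_nth_succ (f := fun i => tableauOf n h A (i, 0))
    tableauOf_succ_zero fun b hb => (mem_offHeart.1 (mem_sdiff.1 hb).1).2.1
  rw [card_of_mem_admissibleArms hA] at hrow
  rw [card_sdiff_of_mem_admissibleArms hh hA] at hcol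
  refine isSYT_iff.2 ⟨fun c hc => tableauOf_eq_zero hh hA hc,
    ⟨mapsTo_tableauOf hh hA, (leftInvOn_cellOf hh hA).injOn, surjOn_tableauOf hh hA⟩,
    hrow, hcol, (nth_zero_le haA).trans_lt hah, ?_⟩
  rw [tableauOf_succ_zero]
  exact (nth_zero_le hbL).trans_lt hbh

lemma armValues_tableauOf (hA : #A = n + 1) : armValues n (tableauOf n h A) = A := by
  rw [armValues, ← hA]
  exact image_range_nth

end Tableau

namespace IsSYT

variable {n : ℕ} {T : ℕ × ℕ → ℕ}

lemma strictMonoOn_arm (hT : IsSYT n T) :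
    StrictMonoOn (fun j => T (0, j + 1)) (Set.Iio (n + 1)) :=
  fun a (ha : a < n + 1) b (hb : b < n + 1) hab =>
    (isSYT_iff.1 hT).2.2.1 (show a + 1 ≤ n + 1 by omega) (show b + 1 ≤ n + 1 by omega) (by omega)

lemma strictMonoOn_leg (hT : IsSYT n T) :
    StrictMonoOn (fun i => T (i + 1, 0)) (Set.Iio (n + 1)) :=
  fun a (ha : a < n + 1) b (hb : b < n + 1) hab =>
    (isSYT_iff.1 hT).2.2.2.1 (show a + 1 ≤ n + 1 by omega) (show b + 1 ≤ n + 1 by omega) (by omega)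

lemma corner_lt (hT : IsSYT n T) {c : ℕ × ℕ} (hc : c ∈ cells n) (h0 : c ≠ (0, 0)) :
    T (0, 0) < T c := by
  obtain ⟨-, -, hrow, hcol, harm, -⟩ := isSYT_iff.1 hT
  rcases mem_cells_iff.1 hc with rfl | ⟨j, hj, rfl⟩ | rfl | ⟨i, hi, rfl⟩
  · exact absurd rfl h0
  · exact hrow (show 0 ≤ n + 1 by omega) (show j + 1 ≤ n + 1 by omega) j.succ_pos
  · exact (hrow (show 0 ≤ n + 1 by omega) (show 1 ≤ n + 1 by omega) one_pos).trans harm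
  · exact hcol (show 0 ≤ n + 1 by omega) (show i + 1 ≤ n + 1 by omega) i.succ_pos

lemma corner_eq_one (hT : IsSYT n T) : T (0, 0) = 1 := by
  have hbij := hT.2.1
  obtain ⟨c, hc, hc1⟩ := hbij.surjOn (show 1 ∈ Set.Icc 1 (2 * n + 4) from ⟨le_rfl, by omega⟩)
  have h1 := (hbij.mapsTo (row_mem_cells.2 (Nat.zero_le (n + 1)))).1
  by_cases h0 : c = (0, 0)
  · rwa [h0] at hc1
  · have := hT.corner_lt hc h0
    omega

lemma apply_mem_offHeart (hT : IsSYT n T) {c : ℕ × ℕ} (hc : c ∈ cells n) (h0 : c ≠ (0, 0))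
    (h1 : c ≠ (1, 1)) : T c ∈ offHeart n (T (1, 1)) := by
  have hbij := hT.2.1
  have := hT.corner_lt hc h0
  rw [hT.corner_eq_one] at this
  exact mem_offHeart.2
    ⟨fun he => h1 (hbij.injOn hc heart_mem_cells he), by omega, (hbij.mapsTo hc).2⟩

lemma heart_mem_Icc (hT : IsSYT n T) : T (1, 1) ∈ Icc 3 (2 * n + 4) := by
  have h01 := hT.corner_lt (row_mem_cells.2 (by omega : 1 ≤ n + 1)) (by simp)
  have h11 := (isSYT_iff.1 hT).2.2.2.2.1
  rw [hT.corner_eq_one] at h01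
  exact mem_Icc.2 ⟨by omega, (hT.2.1.mapsTo heart_mem_cells).2⟩

lemma armValues_subset (hT : IsSYT n T) : armValues n T ⊆ offHeart n (T (1, 1)) := by
  simp only [armValues, image_subset_iff, mem_range]
  exact fun j hj => hT.apply_mem_offHeart (row_mem_cells.2 (by omega)) (by simp) (by simp)

lemma card_armValues (hT : IsSYT n T) : #(armValues n T) = n + 1 :=
  card_image_range_of_strictMonoOn hT.strictMonoOn_arm

lemma offHeart_sdiff_armValues (hT : IsSYT n T) :
    offHeart n (T (1, 1)) \ armValues n T = (range (n + 1)).image fun i => T (i + 1, 0) := by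
  refine (eq_of_subset_of_card_le ?_ ?_).symm
  · simp only [image_subset_iff, mem_range, mem_sdiff, armValues, mem_image, not_exists, not_and]
    refine fun i hi => ⟨hT.apply_mem_offHeart (col_mem_cells.2 (by omega)) (by simp) (by simp),
      fun j hj he => ?_⟩
    have := hT.2.1.injOn (row_mem_cells.2 (by omega)) (col_mem_cells.2 (by omega)) he
    simp at this
  · rw [card_sdiff_of_subset hT.armValues_subset, card_offHeart hT.heart_mem_Icc,
      hT.card_armValues, card_image_range_of_strictMonoOn hT.strictMonoOn_leg]
    omega

lemma armValues_mem_admissibleArms (hT : IsSYT n T) :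
    armValues n T ∈ admissibleArms n (T (1, 1)) := by
  obtain ⟨-, -, -, -, harm, hleg⟩ := isSYT_iff.1 hT
  refine mem_filter.2 ⟨mem_powersetCard.2 ⟨hT.armValues_subset, hT.card_armValues⟩,
    ⟨T (0, 1), mem_image_of_mem _ (by simp), harm⟩, ⟨T (1, 0), ?_, hleg⟩⟩
  rw [hT.offHeart_sdiff_armValues]
  exact mem_image_of_mem _ (by simp)

lemma tableauOf_eq (hT : IsSYT n T) : tableauOf n (T (1, 1)) (armValues n T) = T := by
  funext c
  by_cases hc : c ∈ cells n
  · rcases mem_cells_iff.1 hc with rfl | ⟨j, hj, rfl⟩ | rfl | ⟨i, hi, rfl⟩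
    · exact hT.corner_eq_one.symm
    · exact nth_image_range_of_strictMonoOn hT.strictMonoOn_arm (by omega)
    · rfl
    · rw [tableauOf_succ_zero, hT.offHeart_sdiff_armValues]
      exact nth_image_range_of_strictMonoOn hT.strictMonoOn_leg (by omega)
  · rw [tableauOf_eq_zero hT.heart_mem_Icc hT.armValues_mem_admissibleArms hc, hT.1 c hc]

end IsSYT

theorem ncard_isSYT (n : ℕ) :
    {T | IsSYT n T}.ncard = #((Icc 3 (2 * n + 4)).sigma (admissibleArms n)) := by
  have hbij : Set.BijOn (fun p : (_ : ℕ) × Finset ℕ => tableauOf n p.1 p.2)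
      ((Icc 3 (2 * n + 4)).sigma (admissibleArms n)) {T | IsSYT n T} := by
    refine ⟨fun p hp => isSYT_tableauOf (mem_sigma.1 hp).1 (mem_sigma.1 hp).2, ?_, ?_⟩
    · rintro ⟨h, A⟩ hp ⟨h', A'⟩ hp' (he : tableauOf n h A = tableauOf n h' A')
      obtain rfl : h = h' := congrFun he (1, 1)
      suffices A = A' by rw [this]
      rw [← armValues_tableauOf (card_of_mem_admissibleArms (A := A) (mem_sigma.1 hp).2), he,
        armValues_tableauOf (card_of_mem_admissibleArms (A := A') (mem_sigma.1 hp').2)]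
    · exact fun T hT => ⟨⟨T (1, 1), armValues n T⟩,
        mem_sigma.2 ⟨hT.heart_mem_Icc, hT.armValues_mem_admissibleArms⟩, hT.tableauOf_eq⟩
  rw [← hbij.image_eq, hbij.injOn.ncard_image, Set.ncard_coe_finset]

lemma card_admissibleArms_add {n h : ℕ} (hh : h ∈ Icc 3 (2 * n + 4)) :
    #(admissibleArms n h) + 2 * (2 * n + 4 - h).choose (n + 1) = (2 * n + 2).choose (n + 1) := by
  have hS := card_offHeart hh
  have hh' := mem_Icc.1 hh
  have hU : {x ∈ offHeart n h | ¬x < h} = Ioc h (2 * n + 4) := by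
    ext x
    simp only [mem_filter, mem_offHeart, mem_Ioc]
    omega
  have := card_filter_exists_and_exists_sdiff_add (p := (· < h)) (k := n + 1)
    (by omega : n + 1 ≤ #(offHeart n h)) ⟨2, mem_offHeart.2 ⟨by omega, le_rfl, by omega⟩, by omega⟩
  rw [hU, Nat.card_Ioc, hS, show 2 * n + 2 - (n + 1) = n + 1 by omega] at this
  rw [admissibleArms, ← this]
  ring

lemma sum_Icc_choose_sub (n : ℕ) :
    ∑ h ∈ Icc 3 (2 * n + 4), (2 * n + 4 - h).choose (n + 1) = (2 * n + 2).choose (n + 2) :=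
  calc ∑ h ∈ Icc 3 (2 * n + 4), (2 * n + 4 - h).choose (n + 1)
      = ∑ m ∈ Icc 0 (2 * n + 1), m.choose (n + 1) := by
        refine sum_nbij' (2 * n + 4 - ·) (2 * n + 4 - ·) ?_ ?_ ?_ ?_ fun _ _ => rfl <;>
          intro x hx <;> simp only [mem_Icc] at * <;> omega
    _ = ∑ m ∈ Icc (n + 1) (2 * n + 1), m.choose (n + 1) := by
        refine (sum_subset (Icc_subset_Icc_left (Nat.zero_le _)) fun m hm hm' => ?_).symm
        simp only [mem_Icc] at hm hm'
        exact Nat.choose_eq_zero_of_lt (by omega)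
    _ = (2 * n + 2).choose (n + 2) := Nat.sum_Icc_choose _ _

theorem card_sigma_admissibleArms_add (n : ℕ) :
    #((Icc 3 (2 * n + 4)).sigma (admissibleArms n)) + 2 * (2 * n + 2).choose (n + 2) =
      (2 * n + 2) * (2 * n + 2).choose (n + 1) := by
  rw [card_sigma, ← sum_Icc_choose_sub, mul_sum, ← sum_add_distrib,
    sum_congr rfl fun h hh => card_admissibleArms_add hh, sum_const, Nat.card_Icc, smul_eq_mul,
    show 2 * n + 4 + 1 - 3 = 2 * n + 2 by omega]

/-- The number of standard Young tableaux of shape `θ⁽ⁿ⁾ = (n+2,2,1ⁿ)` is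
`C(2n,n) · (4n+4)(2n+1) / (n+2)`. -/
theorem card_syt (n : ℕ) :
    ({T : ℕ × ℕ → ℕ | IsSYT n T}.ncard : ℚ) =
      (Nat.choose (2 * n) n : ℚ) * ((4 * n + 4) * (2 * n + 1)) / (n + 2) := by
  have hcount := card_sigma_admissibleArms_add n
  rw [← ncard_isSYT] at hcount
  have hshift : (2 * n + 2).choose (n + 2) * (n + 2) = (2 * n + 2).choose (n + 1) * (n + 1) := by
    have := Nat.choose_succ_right_eq (2 * n + 2) (n + 1)
    rwa [show 2 * n + 2 - (n + 1) = n + 1 by omega] at this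
  have hcentral : (n + 1) * (2 * n + 2).choose (n + 1) = 2 * (2 * n + 1) * (2 * n).choose n := by
    simpa [Nat.centralBinom_eq_two_mul_choose, mul_add] using Nat.succ_mul_centralBinom_succ n
  rw [eq_div_iff (by positivity)]
  qify at hcount hshift hcentral
  linear_combination (n + 2 : ℚ) * hcount - 2 * hshift + (2 * n + 2 : ℚ) * hcentral
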